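/- For non-negative integers n_1,...,n_m with n = n_1+...+n_m and nonempty words w^1,...,w^n, the multiset Sh(OSh(w^1,...,w^{n_1}), ..., OSh(w^{n^{m-1}+1},...,w^n)) obtained by first ordered-shuffling within each of the m blocks and then shuffling the resulting m words equals the disjoint union over (n_1,...,n_m)-shuffle permutations π of the multisets OSh(w^{π^{-1}(1)},...,w^{π^{-1}(n)}). -/

import Mathlib

/-- Multiset of all shuffles (interleavings) of two lists. -/
def shuffles {α : Type*} : List α → List α → Multiset (List α)
  | [], bs => {bs}
  | a :: as, [] => {a :: as}
  | a :: as, b :: bs =>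
      (shuffles as (b :: bs)).map (a :: ·) + (shuffles (a :: as) bs).map (b :: ·)
termination_by as bs => as.length + bs.length

/-- Half (ordered) shuffle of two words: the shuffles in which the last letter
of the second word stays last.  Convention: `osh2 a [] = 0`, `osh2 [] b = {b}`. -/
def osh2 {α : Type*} (a b : List α) : Multiset (List α) :=
  match b.getLast? with
  | none => 0
  | some x => (shuffles a b.dropLast).map (· ++ [x])

/-- Multiset of ordered shuffles of a list of words (iterated half-shuffle,
left to right): interleavings in which the final letters of the words appear
in the given relative order. -/
def oshMany {α : Type*} (ws : List (List α)) : Multiset (List α) :=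
  ws.foldl (fun acc w => acc.bind fun u => osh2 u w) {([] : List α)}

/-- Multiset of all shuffles of a list of words. -/
def shMany {α : Type*} (ws : List (List α)) : Multiset (List α) :=
  ws.foldl (fun acc w => acc.bind fun u => shuffles u w) {([] : List α)}

/-- Shuffles of a list of multisets of words: all interleavings of all choices
of one word from each multiset. -/
def shManyM {α : Type*} (ms : List (Multiset (List α))) : Multiset (List α) :=
  ms.foldl (fun acc mw => acc.bind fun u => mw.bind fun w => shuffles u w) {([] : List α)}

/-! Words ending in a letter split by that letter: `oshMany (A ++ [a ++ [x]])` is the shuffle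
product of `oshMany A` with `a`, followed by `x`, and `shuffles (p ++ [x]) (q ++ [y])` splits
according to which of `x`, `y` comes last. Since the shuffle product of multisets of words is
commutative and associative, splitting both sides of the two-block identity
`shuffleProd (oshMany A) (oshMany B) = (shuffles A B).bind oshMany` by the block whose last word
ends last reduces it to shorter blocks. Folding the two-block identity over the blocks gives the
theorem; nonemptiness of the words is what makes every block end in a letter. -/

@[simp]
theorem Multiset.bind_singleton_eq_self {α : Type*} (s : Multiset α) :
    (s.bind fun a => {a}) = s := by
  simpa using Multiset.bind_singleton s id

section Shuffles

variable {α : Type*}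

@[simp]
lemma shuffles_nil_left (v : List α) : shuffles [] v = {v} := by
  cases v <;> simp [shuffles]

@[simp]
lemma shuffles_nil_right (u : List α) : shuffles u [] = {u} := by
  cases u <;> simp [shuffles]

lemma shuffles_cons_cons (a b : α) (as bs : List α) :
    shuffles (a :: as) (b :: bs) =
      (shuffles as (b :: bs)).map (a :: ·) + (shuffles (a :: as) bs).map (b :: ·) := by
  simp [shuffles]

lemma shuffles_comm (u v : List α) : shuffles u v = shuffles v u := by
  induction u generalizing v with
  | nil => simp
  | cons a as ih =>
    induction v with
    | nil => simp
    | cons b bs ihv => rw [shuffles_cons_cons, shuffles_cons_cons, ih, ihv, add_comm]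

lemma perm_append_of_mem_shuffles {u v t : List α} (h : t ∈ shuffles u v) : t.Perm (u ++ v) := by
  induction u generalizing v t with
  | nil => simp_all
  | cons a as ih =>
    induction v generalizing t with
    | nil => simp_all
    | cons b bs ihv =>
      rw [shuffles_cons_cons, Multiset.mem_add, Multiset.mem_map, Multiset.mem_map] at h
      rcases h with ⟨t', ht', rfl⟩ | ⟨t', ht', rfl⟩
      · exact (ih ht').cons a
      · exact ((ihv ht').cons b).trans List.perm_middle.symm

lemma shuffles_append_singleton (p q : List α) (x y : α) :
    shuffles (p ++ [x]) (q ++ [y]) =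
      (shuffles p (q ++ [y])).map (· ++ [x]) + (shuffles (p ++ [x]) q).map (· ++ [y]) := by
  induction p generalizing q with
  | nil =>
    induction q with
    | nil => simp [shuffles_cons_cons, add_comm]
    | cons c q ihq =>
      simp only [List.nil_append, List.cons_append] at ihq ⊢
      rw [shuffles_cons_cons, ihq, shuffles_cons_cons]
      simp [Multiset.map_map, Multiset.cons_swap]
  | cons a p ihp =>
    induction q with
    | nil =>
      have := ihp []
      simp only [List.nil_append, List.cons_append] at this ⊢
      rw [shuffles_cons_cons, this, shuffles_cons_cons]
      simp only [shuffles_nil_right, Multiset.map_singleton, List.append_assoc, List.cons_append,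
        List.nil_append, Multiset.map_add, Multiset.map_map, Function.comp_apply]
      abel
    | cons c q ihq =>
      have := ihp (c :: q)
      simp only [List.cons_append] at this ihq ⊢
      rw [shuffles_cons_cons, this, ihq, shuffles_cons_cons, shuffles_cons_cons]
      simp only [Multiset.map_add, Multiset.map_map, Function.comp_def, List.cons_append]
      abel

lemma shuffles_bind_shuffles_cons (x y z : α) (a b c : List α) :
    (shuffles (x :: a) (y :: b)).bind (shuffles · (z :: c)) =
      ((shuffles a (y :: b)).bind (shuffles · (z :: c))).map (x :: ·) +
      ((shuffles (x :: a) b).bind (shuffles · (z :: c))).map (y :: ·) +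
      ((shuffles (x :: a) (y :: b)).bind (shuffles · c)).map (z :: ·) := by
  simp only [shuffles_cons_cons x y, shuffles_cons_cons _ z, Multiset.add_bind,
    Multiset.bind_map, Multiset.bind_add, Multiset.map_add, Multiset.map_bind]
  abel

lemma shuffles_bind_shuffles_rotate (a b c : List α) :
    (shuffles a b).bind (shuffles · c) = (shuffles b c).bind (shuffles · a) := by
  induction a generalizing b c with
  | nil => simp
  | cons x a iha =>
    induction b generalizing c with
    | nil => simp [shuffles_comm]
    | cons y b ihb =>
      induction c with
      | nil => simp [shuffles_comm]
      | cons z c ihc =>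
        rw [shuffles_bind_shuffles_cons, shuffles_bind_shuffles_cons, iha, ihb, ihc]
        abel

lemma shuffles_assoc (a b c : List α) :
    (shuffles a b).bind (shuffles · c) = (shuffles b c).bind (shuffles a ·) := by
  rw [shuffles_bind_shuffles_rotate]
  exact Multiset.bind_congr fun t _ => shuffles_comm t a

end Shuffles

section ShuffleProd

variable {α : Type*}

def shuffleProd (S T : Multiset (List α)) : Multiset (List α) :=
  S.bind fun u => T.bind fun v => shuffles u v

lemma shuffleProd_comm (S T : Multiset (List α)) : shuffleProd S T = shuffleProd T S := by
  unfold shuffleProd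
  rw [Multiset.bind_bind]
  exact Multiset.bind_congr fun v _ => Multiset.bind_congr fun u _ => shuffles_comm u v

lemma shuffleProd_assoc (S T R : Multiset (List α)) :
    shuffleProd (shuffleProd S T) R = shuffleProd S (shuffleProd T R) := by
  simp only [shuffleProd, Multiset.bind_assoc]
  refine Multiset.bind_congr fun u _ => Multiset.bind_congr fun v _ => ?_
  rw [Multiset.bind_bind]
  exact Multiset.bind_congr fun r _ => shuffles_assoc u v r

lemma shuffleProd_right_comm (S T R : Multiset (List α)) :
    shuffleProd (shuffleProd S T) R = shuffleProd (shuffleProd S R) T := by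
  rw [shuffleProd_assoc, shuffleProd_comm T, shuffleProd_assoc]

lemma shuffleProd_bind_left {β : Type*} (s : Multiset β) (f : β → Multiset (List α))
    (T : Multiset (List α)) : shuffleProd (s.bind f) T = s.bind fun b => shuffleProd (f b) T :=
  Multiset.bind_assoc

lemma shuffleProd_map_append_singleton (S T : Multiset (List α)) (x y : α) :
    shuffleProd (S.map (· ++ [x])) (T.map (· ++ [y])) =
      (shuffleProd S (T.map (· ++ [y]))).map (· ++ [x]) +
      (shuffleProd (S.map (· ++ [x])) T).map (· ++ [y]) := by
  simp [shuffleProd, Multiset.bind_map, shuffles_append_singleton, Multiset.bind_add,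
    Multiset.map_bind]

end ShuffleProd

section OrderedShuffles

variable {α : Type*}

lemma oshMany_append_singleton (A : List (List α)) (a : List α) (x : α) :
    oshMany (A ++ [a ++ [x]]) = (shuffleProd (oshMany A) {a}).map (· ++ [x]) := by
  simp [oshMany, osh2, shuffleProd, List.foldl_append, Multiset.map_bind]

lemma shuffleProd_oshMany (A B : List (List α)) (hA : ∀ w ∈ A, w ≠ []) (hB : ∀ w ∈ B, w ≠ []) :
    shuffleProd (oshMany A) (oshMany B) = (shuffles A B).bind oshMany := by
  induction A using List.reverseRecOn generalizing B with
  | nil => simp [oshMany, shuffleProd]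
  | append_singleton A a ihA =>
    induction B using List.reverseRecOn with
    | nil => simp [oshMany, shuffleProd]
    | append_singleton B b ihB =>
      obtain ⟨a, x, rfl⟩ := (List.eq_nil_or_concat' a).resolve_left (hA a (by simp))
      obtain ⟨b, y, rfl⟩ := (List.eq_nil_or_concat' b).resolve_left (hB b (by simp))
      have ihA := ihA (B ++ [b ++ [y]]) (fun w hw => hA w (by simp [hw])) hB
      have ihB := ihB (fun w hw => hB w (by simp [hw]))
      calc shuffleProd (oshMany (A ++ [a ++ [x]])) (oshMany (B ++ [b ++ [y]]))
          = (shuffleProd (shuffleProd (oshMany A) {a}) (oshMany (B ++ [b ++ [y]]))).map (· ++ [x])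
            + (shuffleProd (oshMany (A ++ [a ++ [x]])) (shuffleProd (oshMany B) {b})).map
              (· ++ [y]) := by
            rw [oshMany_append_singleton A, oshMany_append_singleton B,
              shuffleProd_map_append_singleton]
        _ = (shuffleProd (shuffleProd (oshMany A) (oshMany (B ++ [b ++ [y]]))) {a}).map (· ++ [x])
            + (shuffleProd (shuffleProd (oshMany (A ++ [a ++ [x]])) (oshMany B)) {b}).map
              (· ++ [y]) := by
            rw [shuffleProd_right_comm (oshMany A), ← shuffleProd_assoc]
        _ = (shuffles (A ++ [a ++ [x]]) (B ++ [b ++ [y]])).bind oshMany := by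
            rw [ihA, ihB, shuffles_append_singleton, Multiset.add_bind, Multiset.bind_map,
              Multiset.bind_map, shuffleProd_bind_left, shuffleProd_bind_left]
            simp [oshMany_append_singleton, Multiset.map_bind]

lemma foldl_shuffleProd_bind_oshMany (blocks : List (List (List α)))
    (hblocks : ∀ b ∈ blocks, ∀ w ∈ b, w ≠ []) (S : Multiset (List (List α)))
    (hS : ∀ L ∈ S, ∀ w ∈ L, w ≠ []) :
    (blocks.map oshMany).foldl shuffleProd (S.bind oshMany) =
      (blocks.foldl (fun acc b => acc.bind (shuffles · b)) S).bind oshMany := by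
  induction blocks generalizing S with
  | nil => rfl
  | cons b blocks ih =>
    have hb : ∀ w ∈ b, w ≠ [] := hblocks b List.mem_cons_self
    rw [List.map_cons, List.foldl_cons, List.foldl_cons, shuffleProd_bind_left,
      Multiset.bind_congr fun L hL => shuffleProd_oshMany L b (hS L hL) hb, ← Multiset.bind_assoc]
    refine ih (fun c hc => hblocks c (List.mem_cons_of_mem b hc)) _ fun L hL w hw => ?_
    obtain ⟨L₀, hL₀, hL⟩ := Multiset.mem_bind.1 hL
    rcases List.mem_append.1 ((perm_append_of_mem_shuffles hL).subset hw) with hw | hw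
    exacts [hS L₀ hL₀ w hw, hb w hw]

end OrderedShuffles

/-- The list `blocks` holds the `m` blocks `(w^{n^{l-1}+1}, …, w^{n^l})`. Interleavings of the
blocks, counted in `shMany blocks` with multiplicity, are exactly the reorderings
`(w^{π⁻¹(1)}, …, w^{π⁻¹(n)})` by `(n₁,…,n_m)`-shuffles `π`. -/
theorem shuffle_of_orderedShuffles_eq_sum_over_blockShuffles {α : Type*}
    (blocks : List (List (List α)))
    (h : ∀ b ∈ blocks, ∀ w ∈ b, w ≠ []) :
    shManyM (blocks.map oshMany) = (shMany blocks).bind oshMany := by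
  have := foldl_shuffleProd_bind_oshMany blocks h {[]} (by simp)
  rwa [Multiset.singleton_bind] at this
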